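/- For every δ > 1, the approximate potential ψ_δ is three times continuously differentiable on ℝ, and its third derivative is given by ψ_δ'''(s) = 6 s · ξ_δ(|s|) for all s ∈ ℝ. -/

import Mathlib

/-- `ζ(s) = 0` for `s ≤ 0` and `ζ(s) = exp(−1/s²)` for `s > 0`. -/
noncomputable def zeta (s : ℝ) : ℝ :=
  if s ≤ 0 then 0 else Real.exp (-(1 / s ^ 2))

/-- The transition function `ξ_δ`. -/
noncomputable def xi (δ : ℝ) (s : ℝ) : ℝ :=
  if s ≤ δ then 1
  else if s < δ + 1 then zeta (1 + s - δ) * zeta (1 + δ - s) / (zeta 1) ^ 2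
  else 0

/-- The approximate potential
`ψ_δ(s) = ¼ − ½ s² + 6 ∫₀ˢ ∫₀ˣ ∫₀ʸ z ξ_δ(|z|) dz dy dx`. -/
noncomputable def psiDelta (δ : ℝ) (s : ℝ) : ℝ :=
  1 / 4 - (1 / 2) * s ^ 2 +
    6 * ∫ x in (0 : ℝ)..s, (∫ y in (0 : ℝ)..x, (∫ z in (0 : ℝ)..y, z * xi δ |z|))

/-! `ψ_δ` is a quadratic plus six times the threefold primitive of the continuous function
`z ↦ z ξ_δ(|z|)`, so three applications of the fundamental theorem of calculus give both
claims. Continuity of `ξ_δ` comes from `ζ(s) = expNegInvGlue (s |s|)`. -/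

lemma zeta_eq_expNegInvGlue (s : ℝ) : zeta s = expNegInvGlue (s * |s|) := by
  rcases le_or_gt s 0 with hs | hs
  · rw [zeta, if_pos hs,
      expNegInvGlue.zero_of_nonpos (mul_nonpos_of_nonpos_of_nonneg hs (abs_nonneg s))]
  · rw [zeta, if_neg hs.not_ge, abs_of_pos hs, ← sq, expNegInvGlue,
      if_neg (not_le.mpr (by positivity)), one_div]

@[fun_prop]
lemma continuous_zeta : Continuous zeta := by
  rw [funext zeta_eq_expNegInvGlue]
  exact (expNegInvGlue.contDiff (n := 0)).continuous.comp (by fun_prop)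

/-- The middle branch of `xi` already vanishes for `s ≥ δ + 1`. -/
lemma xi_eq_ite (δ s : ℝ) :
    xi δ s = if s ≤ δ then 1 else zeta (1 + s - δ) * zeta (1 + δ - s) / zeta 1 ^ 2 := by
  unfold xi
  split_ifs with h₁ h₂ <;> try rfl
  simp [zeta, show 1 + δ - s ≤ 0 by linarith]

@[fun_prop]
lemma continuous_xi (δ : ℝ) : Continuous (xi δ) := by
  rw [funext (xi_eq_ite δ)]
  refine continuous_const.if_le (by fun_prop) continuous_id continuous_const ?_
  · rintro s rfl
    have hz : zeta 1 ≠ 0 := by simp [zeta, Real.exp_ne_zero]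
    rw [add_sub_cancel_right, ← sq, div_self (pow_ne_zero 2 hz)]

section Primitive

variable {E : Type*} [NormedAddCommGroup E] [NormedSpace ℝ E] [CompleteSpace E] {f : ℝ → E}

noncomputable def primitive (f : ℝ → E) (x : ℝ) : E := ∫ t in (0 : ℝ)..x, f t

theorem hasDerivAt_primitive (hf : Continuous f) (x : ℝ) : HasDerivAt (primitive f) (f x) x :=
  (hf.integral_hasStrictDerivAt 0 x).hasDerivAt

theorem differentiable_primitive (hf : Continuous f) : Differentiable ℝ (primitive f) :=
  fun x => (hasDerivAt_primitive hf x).differentiableAt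

theorem deriv_primitive (hf : Continuous f) : deriv (primitive f) = f :=
  funext fun x => (hasDerivAt_primitive hf x).deriv

theorem ContDiff.primitive {n : ℕ} (hf : ContDiff ℝ n f) :
    ContDiff ℝ (n + 1 : ℕ) (primitive f) := by
  rw [Nat.cast_succ, contDiff_succ_iff_deriv, deriv_primitive hf.continuous]
  exact ⟨differentiable_primitive hf.continuous, by simp, hf⟩

end Primitive

theorem psiDelta_contDiff_three_general (δ : ℝ) :
    ContDiff ℝ 3 (psiDelta δ) ∧
      ∀ s : ℝ, iteratedDeriv 3 (psiDelta δ) s = 6 * s * xi δ |s| := by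
  set F : ℝ → ℝ := fun z => z * xi δ |z|
  have hF : Continuous F := by fun_prop
  have hF₁ : Continuous (primitive F) := (differentiable_primitive hF).continuous
  have hF₂ : Continuous (primitive (primitive F)) := (differentiable_primitive hF₁).continuous
  have hψ : psiDelta δ =
      fun s => 1 / 4 - 1 / 2 * s ^ 2 + 6 * primitive (primitive (primitive F)) s := rfl
  have hψ₁ : deriv (psiDelta δ) = fun s => -s + 6 * primitive (primitive F) s := by
    funext s
    refine ((((hasDerivAt_pow 2 s).const_mul (1 / 2)).const_sub (1 / 4)).add
      ((hasDerivAt_primitive hF₂ s).const_mul 6)).deriv.trans ?_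
    ring
  have hψ₂ :
      deriv (fun s => -s + 6 * primitive (primitive F) s) = fun s => -1 + 6 * primitive F s :=
    funext fun s => ((hasDerivAt_id s).neg.add ((hasDerivAt_primitive hF₁ s).const_mul 6)).deriv
  have hψ₃ : deriv (fun s => -1 + 6 * primitive F s) = fun s => 6 * F s :=
    funext fun s => (((hasDerivAt_primitive hF s).const_mul 6).const_add (-1)).deriv
  refine ⟨?_, fun s => ?_⟩
  · have : ContDiff ℝ 3 (primitive (primitive (primitive F))) :=
      (contDiff_zero.mpr hF).primitive.primitive.primitive
    rw [hψ]
    fun_prop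
  · rw [iteratedDeriv_eq_iterate, Function.iterate_succ_apply, Function.iterate_succ_apply,
      Function.iterate_one, hψ₁, hψ₂, hψ₃, mul_assoc]

/-- For every `δ > 1`, the approximate potential `ψ_δ` is three times continuously
differentiable on `ℝ`, and `ψ_δ'''(s) = 6 s ξ_δ(|s|)` for all `s ∈ ℝ`. -/
theorem psiDelta_contDiff_three (δ : ℝ) (hδ : 1 < δ) :
    ContDiff ℝ 3 (psiDelta δ) ∧
      ∀ s : ℝ, iteratedDeriv 3 (psiDelta δ) s = 6 * s * xi δ |s| :=
  psiDelta_contDiff_three_general δ
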